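/- arXiv:1609.08607 — 2 statements merged into one kernel-verified Lean document; each statement's English description precedes it below -/
import Mathlib

section
/- Let Φ : I → ℝ be a convex function on an interval I of positive real numbers, let T, V be bounded linear invertible operators on a complex Hilbert space H, and let 0 < m < M with [m², M²] contained in the interior of I and m‖Tx‖ ≤ ‖Vx‖ ≤ M‖Tx‖ for all x ∈ H. Then in the operator order, ⊙_Φ(V,T) ≥ 2·((M²−m²)⁻¹ ∫_{m²}^{M²} Φ(t) dt)·|T|² − (M²−m²)⁻¹·[Φ(M²)(M²|T|² − |V|²) + Φ(m²)(|V|² − m²|T|²)]. -/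
/-!
Write `a = m²`, `b = M²`. Splitting `[a, b]` at `t` and bounding `Φ` by its chords on both pieces
(the right half of Hermite–Hadamard) shows that on `[a, b]` the convex `Φ` dominates the affine
function `t ↦ 2 ⨍ Φ - (b - a)⁻¹ ((b - t) Φ(b) + (t - a) Φ(a))`. The norm hypothesis puts the spectrum
of `X = |V T⁻¹|²` in `[a, b]`, so by monotonicity of the functional calculus the same inequality
holds with `X` in place of `t`; conjugating by `T`, which turns `1` into `|T|²` and `X` into
`|V|²`, gives the claim.
-/

variable {H : Type*} [NormedAddCommGroup H] [InnerProductSpace ℂ H] [CompleteSpace H]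

/-- `X = |VT⁻¹|² = (T*)⁻¹ V* V T⁻¹`. -/
noncomputable def qX (V T : (H →L[ℂ] H)ˣ) : H →L[ℂ] H :=
  star (↑(T⁻¹) : H →L[ℂ] H) * (star (V : H →L[ℂ] H) * (V : H →L[ℂ] H)) * (↑(T⁻¹) : H →L[ℂ] H)

/-- The quadratic operator perspective `⊙_Φ(V,T) = T* Φ(X) T`. -/
noncomputable def qPersp (Φ : ℝ → ℝ) (V T : (H →L[ℂ] H)ˣ) : H →L[ℂ] H :=
  star (T : H →L[ℂ] H) * cfc Φ (qX V T) * (T : H →L[ℂ] H)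

/-- `|T|² = T*T`. -/
noncomputable def modSq (T : (H →L[ℂ] H)ˣ) : H →L[ℂ] H :=
  star (T : H →L[ℂ] H) * (T : H →L[ℂ] H)

open Set

section CFC

variable {A : Type*} [Ring A] [StarRing A] [Algebra ℝ A] [TopologicalSpace A] [PartialOrder A]
  [StarOrderedRing A] [ContinuousFunctionalCalculus ℝ A IsSelfAdjoint]

theorem algebraMap_add_smul_le_cfc {a : A} (ha : IsSelfAdjoint a) {f : ℝ → ℝ}
    (hf : ContinuousOn f (spectrum ℝ a)) {c₀ c₁ : ℝ} (h : ∀ t ∈ spectrum ℝ a, c₀ + c₁ * t ≤ f t) :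
    algebraMap ℝ A c₀ + c₁ • a ≤ cfc f a :=
  calc algebraMap ℝ A c₀ + c₁ • a = cfc (fun t => c₀ + c₁ * t) a := by
        rw [cfc_add a (fun _ => c₀) (c₁ * ·), cfc_const c₀ a, cfc_const_mul_id c₁ a]
    _ ≤ cfc f a := cfc_mono h

end CFC

namespace ConvexOn

variable {s : Set ℝ} {f : ℝ → ℝ} {a b : ℝ}

theorem le_chord (hf : ConvexOn ℝ s f) (ha : a ∈ s) (hb : b ∈ s) {u : ℝ} (hu : u ∈ Icc a b) :
    f u ≤ f a + (f b - f a) / (b - a) * (u - a) := by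
  rcases eq_or_lt_of_le hu.1 with rfl | hau
  · simp
  have hslope := hf.secant_mono ha (hf.1.ordConnected.out ha hb hu) hb hau.ne'
    (hau.trans_le hu.2).ne' hu.2
  rw [div_le_iff₀ (sub_pos.2 hau)] at hslope
  linarith

theorem two_mul_integral_le (hf : ConvexOn ℝ s f) (ha : a ∈ s) (hb : b ∈ s) (hab : a ≤ b)
    (hc : ContinuousOn f (Icc a b)) :
    2 * ∫ u in a..b, f u ≤ (b - a) * (f a + f b) := by
  rcases eq_or_lt_of_le hab with rfl | hab
  · simp
  set c := (f b - f a) / (b - a)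
  have hchord : ∫ u in a..b, f u ≤ ∫ u in a..b, f a + c * (u - a) :=
    intervalIntegral.integral_mono_on hab.le (hc.intervalIntegrable_of_Icc hab.le)
      ((by fun_prop : Continuous _).intervalIntegrable a b) fun u hu => hf.le_chord ha hb hu
  have hline : ∫ u in a..b, f a + c * (u - a) = (b - a) * (f a + f b) / 2 := by
    have hc : c * (b - a) = f b - f a := div_mul_cancel₀ _ (sub_pos.2 hab).ne'
    rw [intervalIntegral.integral_comp_sub_right (fun u => f a + c * u),
      intervalIntegral.integral_add intervalIntegrable_const
        ((continuous_const_mul c).intervalIntegrable _ _),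
      intervalIntegral.integral_const_mul, integral_id, intervalIntegral.integral_const]
    linear_combination (b - a) / 2 * hc
  linarith

theorem two_mul_integral_le_of_mem_Icc (hf : ConvexOn ℝ s f) (ha : a ∈ s) (hb : b ∈ s)
    (hc : ContinuousOn f (Icc a b)) {t : ℝ} (ht : t ∈ Icc a b) :
    2 * ∫ u in a..b, f u ≤ (b - a) * f t + (t - a) * f a + (b - t) * f b := by
  have hts : t ∈ s := hf.1.ordConnected.out ha hb ht
  have hcl : ContinuousOn f (Icc a t) := hc.mono (Icc_subset_Icc_right ht.2)
  have hcr : ContinuousOn f (Icc t b) := hc.mono (Icc_subset_Icc_left ht.1)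
  rw [← intervalIntegral.integral_add_adjacent_intervals (hcl.intervalIntegrable_of_Icc ht.1)
    (hcr.intervalIntegrable_of_Icc ht.2)]
  linarith [hf.two_mul_integral_le ha hts ht.1 hcl, hf.two_mul_integral_le hts hb ht.2 hcr]

theorem affine_minorant (hf : ConvexOn ℝ s f) (ha : a ∈ s) (hb : b ∈ s) (hab : a < b)
    (hc : ContinuousOn f (Icc a b)) {t : ℝ} (ht : t ∈ Icc a b) :
    2 * ((b - a)⁻¹ * ∫ u in a..b, f u) - (b - a)⁻¹ * (f b * b - f a * a) +
      (b - a)⁻¹ * (f b - f a) * t ≤ f t := by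
  have h := hf.two_mul_integral_le_of_mem_Icc ha hb hc ht
  have hba : b - a ≠ 0 := (sub_pos.2 hab).ne'
  rw [← sub_nonneg] at h ⊢
  refine (mul_nonneg (inv_nonneg.2 (sub_pos.2 hab).le) h).trans_eq ?_
  field_simp
  ring

end ConvexOn

namespace ContinuousLinearMap

theorem le_iff_reApplyInnerSelf_le {S T : H →L[ℂ] H} (hS : IsSelfAdjoint S)
    (hT : IsSelfAdjoint T) : S ≤ T ↔ ∀ x, S.reApplyInnerSelf x ≤ T.reApplyInnerSelf x := by
  simp only [le_def, isPositive_def', hT.sub hS, true_and, reApplyInnerSelf_apply, sub_apply,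
    inner_sub_left, map_sub, sub_nonneg]

theorem reApplyInnerSelf_star_mul_self (w : H →L[ℂ] H) (x : H) :
    (star w * w).reApplyInnerSelf x = ‖w x‖ ^ 2 :=
  (apply_norm_sq_eq_inner_adjoint_left w x).symm

theorem reApplyInnerSelf_algebraMap {E : Type*} [NormedAddCommGroup E] [InnerProductSpace ℂ E]
    (r : ℝ) (x : E) : (algebraMap ℝ (E →L[ℂ] E) r).reApplyInnerSelf x = r * ‖x‖ ^ 2 := by
  rw [reApplyInnerSelf_apply, Algebra.algebraMap_eq_smul_one, smul_apply, one_apply_eq_self,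
    RCLike.real_smul_eq_coe_smul (K := ℂ), inner_smul_real_left, RCLike.smul_re,
    inner_self_eq_norm_sq]

theorem spectrum_star_mul_self_subset_Icc {w : H →L[ℂ] H} {m M : ℝ} (hm : 0 ≤ m)
    (h : ∀ x, m * ‖x‖ ≤ ‖w x‖ ∧ ‖w x‖ ≤ M * ‖x‖) :
    spectrum ℝ (star w * w) ⊆ Icc (m ^ 2) (M ^ 2) := by
  have hsa : IsSelfAdjoint (star w * w) := .star_mul_self w
  have hsa_alg (r : ℝ) : IsSelfAdjoint (algebraMap ℝ (H →L[ℂ] H) r) := .algebraMap _ (.all r)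
  have hlower : algebraMap ℝ (H →L[ℂ] H) (m ^ 2) ≤ star w * w := by
    refine (le_iff_reApplyInnerSelf_le (hsa_alg _) hsa).2 fun x => ?_
    rw [reApplyInnerSelf_star_mul_self, reApplyInnerSelf_algebraMap, ← mul_pow]
    exact pow_le_pow_left₀ (by positivity) (h x).1 2
  have hupper : star w * w ≤ algebraMap ℝ (H →L[ℂ] H) (M ^ 2) := by
    refine (le_iff_reApplyInnerSelf_le hsa (hsa_alg _)).2 fun x => ?_
    rw [reApplyInnerSelf_star_mul_self, reApplyInnerSelf_algebraMap, ← mul_pow]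
    exact pow_le_pow_left₀ (norm_nonneg _) (h x).2 2
  exact fun t ht => ⟨(algebraMap_le_iff_le_spectrum hsa).1 hlower t ht,
    (le_algebraMap_iff_spectrum_le hsa).1 hupper t ht⟩

end ContinuousLinearMap

theorem isSelfAdjoint_qX (V T : (H →L[ℂ] H)ˣ) : IsSelfAdjoint (qX V T) := by
  simpa only [qX, star_mul, star_star, mul_assoc] using
    IsSelfAdjoint.star_mul_self ((V : H →L[ℂ] H) * ↑T⁻¹)

theorem spectrum_qX_subset_Icc {V T : (H →L[ℂ] H)ˣ} {m M : ℝ} (hm : 0 ≤ m)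
    (hTV : ∀ x : H, m * ‖(T : H →L[ℂ] H) x‖ ≤ ‖(V : H →L[ℂ] H) x‖ ∧
      ‖(V : H →L[ℂ] H) x‖ ≤ M * ‖(T : H →L[ℂ] H) x‖) :
    spectrum ℝ (qX V T) ⊆ Icc (m ^ 2) (M ^ 2) := by
  have hqX : qX V T = star ((V : H →L[ℂ] H) * ↑T⁻¹) * ((V : H →L[ℂ] H) * ↑T⁻¹) := by
    simp only [qX, star_mul, mul_assoc]
  rw [hqX]
  refine ContinuousLinearMap.spectrum_star_mul_self_subset_Icc hm fun x => ?_
  have hTT : (T : H →L[ℂ] H) ((↑T⁻¹ : H →L[ℂ] H) x) = x :=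
    congrArg (fun S : H →L[ℂ] H => S x) T.mul_inv
  have hx := hTV ((↑T⁻¹ : H →L[ℂ] H) x)
  rw [hTT] at hx
  exact hx

theorem star_mul_qX_mul (V T : (H →L[ℂ] H)ˣ) :
    star (T : H →L[ℂ] H) * qX V T * T = modSq V := by
  have hT : star (T : H →L[ℂ] H) * star ↑T⁻¹ = 1 := by rw [← star_mul, T.inv_mul, star_one]
  calc star (T : H →L[ℂ] H) * qX V T * T
      = (star (T : H →L[ℂ] H) * star ↑T⁻¹) * modSq V * (↑T⁻¹ * T) := by
        simp only [qX, modSq, mul_assoc]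
    _ = modSq V := by rw [hT, T.inv_mul, one_mul, mul_one]

theorem stmt6_general (I : Set ℝ)
    (Φ : ℝ → ℝ) (hΦ : ConvexOn ℝ I Φ)
    (T V : (H →L[ℂ] H)ˣ) (m M : ℝ) (hm : 0 < m) (hmM : m < M)
    (hsub : Set.Icc (m ^ 2) (M ^ 2) ⊆ interior I)
    (hTV : ∀ x : H, m * ‖(T : H →L[ℂ] H) x‖ ≤ ‖(V : H →L[ℂ] H) x‖ ∧ ‖(V : H →L[ℂ] H) x‖ ≤ M * ‖(T : H →L[ℂ] H) x‖) :
    (2 * ((M ^ 2 - m ^ 2)⁻¹ * ∫ t in (m ^ 2 : ℝ)..(M ^ 2), Φ t)) • modSq T -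
      (M ^ 2 - m ^ 2)⁻¹ •
        (Φ (M ^ 2) • ((M ^ 2 : ℝ) • modSq T - modSq V) +
          Φ (m ^ 2) • (modSq V - (m ^ 2 : ℝ) • modSq T)) ≤
      qPersp Φ V T := by
  have hspec := spectrum_qX_subset_Icc hm.le hTV
  have hcont : ContinuousOn Φ (Icc (m ^ 2) (M ^ 2)) := hΦ.continuousOn_interior.mono hsub
  have hmM2 : m ^ 2 < M ^ 2 := by gcongr
  have hI : Icc (m ^ 2) (M ^ 2) ⊆ I := hsub.trans interior_subset
  have hX := algebraMap_add_smul_le_cfc (isSelfAdjoint_qX V T) (hcont.mono hspec) fun t ht =>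
    hΦ.affine_minorant (hI ⟨le_rfl, hmM2.le⟩) (hI ⟨hmM2.le, le_rfl⟩) hmM2 hcont (hspec ht)
  have hconj := star_left_conjugate_le_conjugate hX (T : H →L[ℂ] H)
  rw [mul_add, add_mul, Algebra.algebraMap_eq_smul_one, mul_smul_comm, smul_mul_assoc, mul_one,
    mul_smul_comm, smul_mul_assoc, star_mul_qX_mul] at hconj
  rw [qPersp]
  refine le_of_eq_of_le ?_ hconj
  simp only [modSq]
  module

theorem stmt6 (I : Set ℝ) (hIpos : I ⊆ Set.Ioi 0)
    (Φ : ℝ → ℝ) (hΦ : ConvexOn ℝ I Φ)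
    (T V : (H →L[ℂ] H)ˣ) (m M : ℝ) (hm : 0 < m) (hmM : m < M)
    (hsub : Set.Icc (m ^ 2) (M ^ 2) ⊆ interior I)
    (hTV : ∀ x : H, m * ‖(T : H →L[ℂ] H) x‖ ≤ ‖(V : H →L[ℂ] H) x‖ ∧ ‖(V : H →L[ℂ] H) x‖ ≤ M * ‖(T : H →L[ℂ] H) x‖) :
    (2 * ((M ^ 2 - m ^ 2)⁻¹ * ∫ t in (m ^ 2 : ℝ)..(M ^ 2), Φ t)) • modSq T -
      (M ^ 2 - m ^ 2)⁻¹ •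
        (Φ (M ^ 2) • ((M ^ 2 : ℝ) • modSq T - modSq V) +
          Φ (m ^ 2) • (modSq V - (m ^ 2 : ℝ) • modSq T)) ≤
      qPersp Φ V T :=
  stmt6_general I Φ hΦ T V m M hm hmM hsub hTV
end

section
/- Let T, V be bounded linear invertible operators on a complex Hilbert space H. Then for every x ∈ H with x ≠ 0: ⟨⊙(T|V)x, x⟩ ≤ ‖Tx‖²·ln(‖Vx‖²/‖Tx‖²) ≤ ‖Vx‖² − ‖Tx‖², where ⊙(T|V) is the quadratic relative operator entropy; in particular the first inequality improves the known bound ⟨⊙(T|V)x, x⟩ ≤ ‖Vx‖² − ‖Tx‖². -/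
variable {H : Type*} [NormedAddCommGroup H] [InnerProductSpace ℂ H] [CompleteSpace H]

/-!
`log` lies below its tangent line at every `b > 0`: `log t ≤ log b - 1 + t / b`. Through the
continuous functional calculus this holds for the positive invertible operator `X = |V T⁻¹|²`,
and testing it against `y = T x`, for which `⟨X y, y⟩ = ‖V x‖²`, at the point
`b = ‖V x‖² / ‖T x‖²` gives the first inequality. The second is `log b ≤ b - 1`.
-/

open ContinuousLinearMap RCLike

lemma Real.log_le_log_sub_one_add_div {b t : ℝ} (hb : 0 < b) (ht : 0 < t) :
    Real.log t ≤ Real.log b - 1 + t / b := by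
  have h := Real.log_le_sub_one_of_pos (div_pos ht hb)
  rw [Real.log_div ht.ne' hb.ne'] at h
  linarith

lemma Real.mul_log_div_le_sub {m n : ℝ} (hm : 0 < m) (hn : 0 < n) :
    n * Real.log (m / n) ≤ m - n := by
  have h := Real.log_le_sub_one_of_pos (div_pos hm hn)
  calc n * Real.log (m / n) ≤ n * (m / n - 1) := by gcongr
    _ = m - n := by field_simp

section CStarAlgebra

variable {A : Type*} [CStarAlgebra A] [PartialOrder A] [StarOrderedRing A]

lemma CFC.log_le_algebraMap_add_smul {a : A} (ha : IsStrictlyPositive a) {b : ℝ} (hb : 0 < b) :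
    cfc Real.log a ≤ algebraMap ℝ A (Real.log b - 1) + b⁻¹ • a := by
  have hline : cfc (fun t => (Real.log b - 1) + b⁻¹ * t) a
      = algebraMap ℝ A (Real.log b - 1) + b⁻¹ • a := by
    rw [cfc_const_add _ _ _ (by fun_prop), cfc_const_mul_id b⁻¹ a]
  rw [← hline]
  refine cfc_mono (fun t ht => ?_) (Real.continuousOn_log.mono fun t ht => ?_) (by fun_prop)
  · have := Real.log_le_log_sub_one_add_div hb (ha.spectrum_pos ht)
    rwa [div_eq_inv_mul] at this
  · exact (ha.spectrum_pos ht).ne'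

end CStarAlgebra

section HilbertSpace

variable {𝕜 E : Type*} [RCLike 𝕜] [NormedAddCommGroup E] [InnerProductSpace 𝕜 E]

lemma ContinuousLinearMap.re_inner_apply_le_of_le {f g : E →L[𝕜] E} (h : f ≤ g) (x : E) :
    re (inner 𝕜 (f x) x) ≤ re (inner 𝕜 (g x) x) := by
  have := ((le_def f g).mp h).re_inner_nonneg_left x
  rwa [sub_apply, inner_sub_left, map_sub, sub_nonneg] at this

lemma ContinuousLinearMap.inner_star_mul_mul_apply [CompleteSpace E] (M f : E →L[𝕜] E) (x : E) :
    inner 𝕜 ((star f * M * f) x) x = inner 𝕜 (M (f x)) (f x) := by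
  rw [mul_apply_eq_comp, mul_apply_eq_comp, star_eq_adjoint, adjoint_inner_left]

end HilbertSpace

lemma re_inner_cfc_log_apply_le {a : H →L[ℂ] H} (ha : IsStrictlyPositive a) {y : H}
    (hy : 0 < re (inner ℂ (a y) y)) :
    re (inner ℂ (cfc Real.log a y) y) ≤
      ‖y‖ ^ 2 * Real.log (re (inner ℂ (a y) y) / ‖y‖ ^ 2) := by
  set m := re (inner ℂ (a y) y)
  have hy0 : y ≠ 0 := by rintro rfl; simp [m] at hy
  have hn : 0 < ‖y‖ ^ 2 := by positivity
  set b := m / ‖y‖ ^ 2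
  have hb : 0 < b := div_pos hy hn
  calc re (inner ℂ (cfc Real.log a y) y)
      ≤ re (inner ℂ ((algebraMap ℝ (H →L[ℂ] H) (Real.log b - 1) + b⁻¹ • a) y) y) :=
        re_inner_apply_le_of_le (CFC.log_le_algebraMap_add_smul ha hb) y
    _ = (Real.log b - 1) * ‖y‖ ^ 2 + b⁻¹ * m := by
        simp [Algebra.algebraMap_eq_smul_one, ← Complex.ofReal_pow, m]
    _ = ‖y‖ ^ 2 * Real.log b := by
        rw [show m = b * ‖y‖ ^ 2 from (div_mul_cancel₀ m hn.ne').symm]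
        field_simp
        ring

lemma qX_eq_star_mul_self (V T : (H →L[ℂ] H)ˣ) :
    qX V T = star ((V : H →L[ℂ] H) * ↑T⁻¹) * ((V : H →L[ℂ] H) * ↑T⁻¹) := by
  simp only [qX, star_mul, mul_assoc]

lemma isStrictlyPositive_qX (V T : (H →L[ℂ] H)ˣ) : IsStrictlyPositive (qX V T) := by
  rw [qX_eq_star_mul_self]
  have hunit := V.isUnit.mul T⁻¹.isUnit
  exact (hunit.star.mul hunit).isStrictlyPositive (star_mul_self_nonneg _)

lemma re_inner_qX_apply_self (V T : (H →L[ℂ] H)ˣ) (x : H) :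
    re (inner ℂ (qX V T ((T : H →L[ℂ] H) x)) ((T : H →L[ℂ] H) x)) =
      ‖(V : H →L[ℂ] H) x‖ ^ 2 := by
  rw [qX_eq_star_mul_self, mul_apply_eq_comp, star_eq_adjoint, adjoint_inner_left,
    inner_self_eq_norm_sq, mul_apply_eq_comp, ← mul_apply_eq_comp (↑T⁻¹ : H →L[ℂ] H),
    Units.inv_mul, one_apply_eq_self]

lemma inner_qPersp_apply_self (Φ : ℝ → ℝ) (V T : (H →L[ℂ] H)ˣ) (x : H) :
    inner ℂ (qPersp Φ V T x) x =
      inner ℂ (cfc Φ (qX V T) ((T : H →L[ℂ] H) x)) ((T : H →L[ℂ] H) x) :=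
  inner_star_mul_mul_apply _ _ x

theorem stmt19 (T V : (H →L[ℂ] H)ˣ) (x : H) (hx : x ≠ 0) :
    (inner ℂ ((qPersp Real.log V T) x) x : ℂ).re ≤
        ‖(T : H →L[ℂ] H) x‖ ^ 2 * Real.log (‖(V : H →L[ℂ] H) x‖ ^ 2 / ‖(T : H →L[ℂ] H) x‖ ^ 2) ∧
      ‖(T : H →L[ℂ] H) x‖ ^ 2 * Real.log (‖(V : H →L[ℂ] H) x‖ ^ 2 / ‖(T : H →L[ℂ] H) x‖ ^ 2) ≤ ‖(V : H →L[ℂ] H) x‖ ^ 2 - ‖(T : H →L[ℂ] H) x‖ ^ 2 := by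
  have hTx : (T : H →L[ℂ] H) x ≠ 0 :=
    (ContinuousLinearEquiv.unitsEquiv ℂ H T).map_ne_zero_iff.mpr hx
  have hVx : (V : H →L[ℂ] H) x ≠ 0 :=
    (ContinuousLinearEquiv.unitsEquiv ℂ H V).map_ne_zero_iff.mpr hx
  have hqX := re_inner_qX_apply_self V T x
  refine ⟨?_, Real.mul_log_div_le_sub (by positivity) (by positivity)⟩
  rw [inner_qPersp_apply_self, ← hqX]
  exact re_inner_cfc_log_apply_le (isStrictlyPositive_qX V T) (by rw [hqX]; positivity)
end
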